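/- arXiv:1411.4860 — 17 statements merged into one kernel-verified Lean document; each statement's English description precedes it below -/
import Mathlib

section
/- Let S be a semigroup such that for all x, y, z ∈ S, x ∈ {x*y, z*x} (that is, x = x*y or x = z*x). Then S is a left zero semigroup (x*y = x for all x, y) or a right zero semigroup (x*y = y for all x, y). -/
theorem stmt_0 {S : Type*} [Semigroup S]
    (h : ∀ x y z : S, x = x * y ∨ x = z * x) :
    (∀ x y : S, x * y = x) ∨ (∀ x y : S, x * y = y) := by
  have dich : ∀ x : S, (∀ y : S, x * y = x) ∨ (∀ z : S, z * x = x) := by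
    intro x
    by_cases hx : ∀ y : S, x * y = x
    · exact Or.inl hx
    · push_neg at hx
      obtain ⟨b, hb⟩ := hx
      refine Or.inr fun z => ?_
      rcases h x b z with h1 | h1
      · exact absurd h1.symm hb
      · exact h1.symm
  by_cases hl : ∀ x y : S, x * y = x
  · exact Or.inl hl
  · push_neg at hl
    obtain ⟨a, b, hab⟩ := hl
    have haR : ∀ z : S, z * a = a := (dich a).resolve_left fun hL => hab (hL b)
    refine Or.inr fun x y => ?_
    rcases dich y with hyL | hyR
    · exfalso
      have : y = a := (hyL a).symm.trans (haR y)
      exact hab (this ▸ hyL b)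
    · exact hyR x
end

section
/- Let S be a semigroup such that for all x, y, z ∈ S, x*y*z ∈ {x, z}. Then S is a left zero semigroup or a right zero semigroup. -/
theorem stmt_1 {S : Type*} [Semigroup S]
    (h : ∀ x y z : S, x * y * z = x ∨ x * y * z = z) :
    (∀ x y : S, x * y = x) ∨ (∀ x y : S, x * y = y) := by
  have cube : ∀ x : S, x * x * x = x := fun x => (h x x x).elim id id
  have idem : ∀ x : S, x * x = x := by
    intro x
    have h1 := h x (x * x) x
    have h2 : x * (x * x) * x = x * x := by
      rw [show x * (x * x) = x * x * x from (mul_assoc x x x).symm, cube x]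
    rw [h2] at h1
    exact h1.elim id id
  have mem : ∀ a b : S, a * b = a ∨ a * b = b := by
    intro a b
    have := h a a b
    rwa [idem a] at this
  by_contra hc
  push_neg at hc
  obtain ⟨⟨a, b, hab⟩, ⟨x, y, hxy⟩⟩ := hc
  have hab' : a * b = b := (mem a b).resolve_left hab
  have hxy' : x * y = x := (mem x y).resolve_right hxy
  rcases mem b x with hbx | hbx
  · have h1 := h a b x
    rw [hab', hbx] at h1
    rcases h1 with h1 | h1
    · exact hab (by rw [hab', h1])
    · -- b = x
      have h2 := h a b y
      rw [hab', h1, hxy', ← h1] at h2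
      rcases h2 with h2 | h2
      · exact hab (by rw [hab', h2])
      · exact hxy (by rw [hxy', ← h1, h2])
  · have h1 := h b x y
    rw [hbx, hxy'] at h1
    rcases h1 with h1 | h1
    · -- x = b
      have h2 := h a x y
      have hax : a * x = x := by rw [h1, hab', ← h1]
      rw [hax, hxy'] at h2
      rcases h2 with h2 | h2
      · exact hab (by rw [hab', ← h1, h2])
      · exact hxy (by rw [hxy', h2])
    · exact hxy (by rw [hxy', h1])
end

section
/- Let S be a semigroup such that for all x, y, z, w ∈ S, x*y ∈ {y, z*w}. Then either S is a zero semigroup (all products equal) or S is a right zero semigroup. -/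
theorem stmt_2 {S : Type*} [Semigroup S]
    (h : ∀ x y z w : S, x * y = y ∨ x * y = z * w) :
    (∀ x y z w : S, x * y = z * w) ∨ (∀ x y : S, x * y = y) := by
  by_cases hr : ∀ x y : S, x * y = y
  · exact Or.inr hr
  · push_neg at hr
    obtain ⟨a, b, hab⟩ := hr
    left
    intro x y z w
    have h1 : a * b = x * y := (h a b x y).resolve_left hab
    have h2 : a * b = z * w := (h a b z w).resolve_left hab
    rw [← h1, h2]
end

section
/- Let S be a semigroup such that for all x, y, z, u, v ∈ S, x*y*z ∈ {x, z, u*v}. Then S is a left zero semigroup, a zero semigroup, or a right zero semigroup. -/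
theorem stmt_3 {S : Type*} [Semigroup S]
    (h : ∀ x y z u v : S, x * y * z = x ∨ x * y * z = z ∨ x * y * z = u * v) :
    (∀ x y : S, x * y = x) ∨ (∀ x y z w : S, x * y = z * w) ∨ (∀ x y : S, x * y = y) := by
  by_cases hz : ∀ x y z w : S, x * y = z * w
  · exact Or.inr (Or.inl hz)
  push_neg at hz
  obtain ⟨p, q, r, s, hpq⟩ := hz
  have H : ∀ x y z : S, x * y * z = x ∨ x * y * z = z := by
    intro x y z
    rcases h x y z p q with h1 | h1 | h1
    · exact Or.inl h1
    · exact Or.inr h1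
    · rcases h x y z r s with h2 | h2 | h2
      · exact Or.inl h2
      · exact Or.inr h2
      · exact absurd (h1.symm.trans h2) hpq
  have Hxyx : ∀ x y : S, x * y * x = x := by
    intro x y
    rcases H x y x with h1 | h1 <;> exact h1
  have Hid : ∀ x y : S, (x * y) * (x * y) = x * y := by
    intro x y
    rw [← mul_assoc, Hxyx]
  by_cases hl : ∀ x y : S, x * y = x
  · exact Or.inl hl
  by_cases hr : ∀ x y : S, x * y = y
  · exact Or.inr (Or.inr hr)
  exfalso
  push_neg at hl hr
  obtain ⟨a, b, hab⟩ := hl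
  obtain ⟨c, d, hcd⟩ := hr
  have hL : ∀ z : S, (a * b) * z = z := by
    intro z
    have h1 := H a b z
    have h2 := H (a * b) (a * b) z
    rw [Hid a b] at h2
    rcases h2 with h2 | h2
    · rcases h1 with h1 | h1
      · exact absurd (h2.symm.trans h1) hab
      · exact h1
    · exact h2
  have hR : ∀ z : S, z * (c * d) = z := by
    intro z
    have h1 := H z c d
    have h2 := H z (c * d) (c * d)
    rw [mul_assoc z (c * d) (c * d), Hid c d] at h2
    rw [mul_assoc] at h1
    rcases h1 with h1 | h1
    · exact h1
    · rcases h2 with h2 | h2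
      · exact h2
      · exact absurd (h1.symm.trans h2).symm hcd
  have hef : a * b = c * d := (hR (a * b)).symm.trans (hL (c * d))
  have key : ∀ y : S, y = a * b := by
    intro y
    have h1 := Hxyx (a * b) y
    rw [hL y] at h1
    have h2 : y * (a * b) = y := by rw [hef]; exact hR y
    exact (h2.symm.trans h1)
  exact hab (key a).symm
end

section
/- Let S be a semigroup such that for all x, y, z, w ∈ S, x*y*z ∈ {z, x*w}. Then either S satisfies x*y*z = x*w for all x, y, z, w (i.e., S is an inflation of a left zero semigroup), or S is a right zero semigroup. -/
theorem stmt_4 {S : Type*} [Semigroup S]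
    (h : ∀ x y z w : S, x * y * z = z ∨ x * y * z = x * w) :
    (∀ x y z w : S, x * y * z = x * w) ∨ (∀ x y : S, x * y = y) := by
  by_cases hP : ∀ x y z w : S, x * y * z = x * w
  · exact Or.inl hP
  · right
    push_neg at hP
    obtain ⟨a, y0, z0, w0, hne⟩ := hP
    have hne' : a * (y0 * z0) ≠ a * w0 := by rwa [← mul_assoc]
    -- key fact: a * s * z = z for all s, z
    have fact : ∀ s z : S, a * s * z = z := by
      intro s z
      rcases h a s z (y0 * z0) with h1 | h1
      · exact h1
      rcases h a s z w0 with h2 | h2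
      · exact h2
      exact absurd (h1.symm.trans h2) hne'
    intro x y
    by_contra hxy
    -- x has constant left multiplication with value t = x * y
    have hconst : ∀ w : S, x * w = x * y := by
      intro w
      rcases h x (a * (y0 * z0)) y w with h1 | h1
      · exfalso
        apply hxy
        rw [mul_assoc, fact] at h1
        exact h1
      · rw [mul_assoc, fact] at h1
        exact h1.symm
    -- a * (x*y) = y  and  a * (x*y) = x*y
    have h1 : a * (x * y) = y := by
      have := fact x y
      rwa [mul_assoc] at this
    have h2 : a * (x * y) = x * y := by
      have := fact x (x * y)
      rw [mul_assoc, hconst (x * y)] at this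
      exact this
    exact hxy (h2.symm.trans h1)
end

section
/- Let S be a semigroup such that for all x, y, z, w, q ∈ S, x*y*z ∈ {x*w, q*z}. Then S satisfies x*y*z = x*w for all x, y, z, w, or S satisfies x*y*z = w*z for all x, y, z, w. -/
theorem stmt_5 {S : Type*} [Semigroup S]
    (h : ∀ x y z w q : S, x * y * z = x * w ∨ x * y * z = q * z) :
    (∀ x y z w : S, x * y * z = x * w) ∨ (∀ x y z w : S, x * y * z = w * z) := by
  by_cases hL : ∀ x y z w : S, x * y * z = x * w
  · exact Or.inl hL
  · push_neg at hL
    obtain ⟨a, b, c, d, habc⟩ := hL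
    have hR : ∀ q : S, q * c = a * b * c := fun q =>
      ((h a b c d q).resolve_left habc).symm
    right
    intro x y z w
    have hwz : w * y * z = w * z := by
      rcases h w y z z w with h2 | h2 <;> exact h2
    rw [← hwz]
    rcases h x y z c (w * y) with h1 | h1
    · rcases h w y z c (x * y) with h2 | h2
      · rw [h1, h2, hR x, hR w]
      · rw [h2]
    · rw [h1]
end

section
/- Let S be a semigroup such that for all x, y, u, v, z, w ∈ S, x*y ∈ {x*u*v, z*w*y}. Then S satisfies x*y*z = x*w for all x, y, z, w, or S satisfies x*y*z = w*z for all x, y, z, w. -/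
theorem stmt_6 {S : Type*} [Semigroup S]
    (h : ∀ x y u v z w : S, x * y = x * u * v ∨ x * y = z * w * y) :
    (∀ x y z w : S, x * y * z = x * w) ∨ (∀ x y z w : S, x * y * z = w * z) := by
  have dich : ∀ x y : S, (∀ u v, x * y = x * u * v) ∨ (∀ z w, x * y = z * w * y) := by
    intro x y
    by_contra hc
    push_neg at hc
    obtain ⟨⟨u, v, h1⟩, z, w, h2⟩ := hc
    rcases h x y u v z w with h' | h'
    · exact h1 h'
    · exact h2 h'
  by_cases hP : ∀ x y u v : S, x * y = x * u * v
  · left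
    intro x y z w
    exact (hP x w y z).symm
  · right
    have hQ : ∀ a b z' w' : S, a * b = z' * w' * b := by
      intro a b
      rcases dich a b with hPab | hQab
      · by_contra hq
        push_neg at hq
        obtain ⟨z0, w0, hzw⟩ := hq
        push_neg at hP
        obtain ⟨p, q, u0, v0, hpq⟩ := hP
        have hQpq : ∀ z w, p * q = z * w * q :=
          (dich p q).resolve_left (by push_neg; exact ⟨u0, v0, hpq⟩)
        have he : ∀ v, a * b = a * b * v := fun v => hPab b v
        have hf : ∀ zz, p * q = zz * (p * q) := fun zz =>
          (hQpq zz p).trans (mul_assoc zz p q)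
        have hef : a * b = p * q := by
          have h1 : a * b = a * b * (p * q) := he (p * q)
          have h2 : p * q = (a * b) * (p * q) := hf (a * b)
          rw [h1, ← h2]
        apply hzw
        rcases dich (z0 * w0) b with hP' | hQ'
        · have h3 : z0 * w0 * b = z0 * w0 * a * b := hP' a b
          calc a * b = p * q := hef
            _ = (z0 * w0) * (p * q) := hf _
            _ = (z0 * w0) * (a * b) := by rw [← hef]
            _ = z0 * w0 * a * b := (mul_assoc _ _ _).symm
            _ = z0 * w0 * b := h3.symm
        · have h3 : z0 * w0 * b = a * b * b := hQ' a b
          have h4 : a * b = a * b * b := hPab b b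
          rw [h4, ← h3]
      · exact hQab
    intro x y z w
    exact (hQ w z x y).symm
end

section
/- Let S be a semigroup such that for all x, y, z, w, u, v ∈ S, x*y*z*w*u*v ∈ {x*y, u*v}. Then S satisfies x*y*z = x*y for all x, y, z, or S satisfies x*y*z = y*z for all x, y, z. -/
theorem stmt_7 {S : Type*} [Semigroup S]
    (h : ∀ x y z w u v : S, x * y * z * w * u * v = x * y ∨ x * y * z * w * u * v = u * v) :
    (∀ x y z : S, x * y * z = x * y) ∨ (∀ x y z : S, x * y * z = y * z) := by
  -- every element of S*S has cube equal to itself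
  have cube : ∀ a b : S, (a*b)*(a*b)*(a*b) = a*b := by
    intro a b
    have h1 := h a b a b a b
    have e1 : a*b*a*b*a*b = (a*b)*(a*b)*(a*b) := by simp only [mul_assoc]
    rw [e1] at h1
    rcases h1 with h1 | h1 <;> exact h1
  -- every element of S*S is idempotent
  have sq : ∀ a b : S, (a*b)*(a*b) = a*b := by
    suffices hgen : ∀ t : S, t*t*t = t → t*t = t by
      intro a b; exact hgen (a*b) (cube a b)
    intro t h3
    have h1 := h t t (t*t) t t t
    have e1 : t*t*(t*t)*t*t*t = t := by
      calc t*t*(t*t)*t*t*t = (t*t*t)*(t*t*t)*t := by simp only [mul_assoc]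
        _ = t := by rw [h3, h3]
    rw [e1] at h1
    rcases h1 with h1 | h1 <;> exact h1.symm
  -- pointwise dichotomy
  have T : ∀ x y z : S, x*y*z = x*y ∨ x*y*z = y*z := by
    intro x y z
    have hs : (x*y*z)*(x*y*z) = x*y*z := sq (x*y) z
    have h1 := h x y (z*x) (y*(z*x)) y z
    have e1 : x*y*(z*x)*(y*(z*x))*y*z = x*y*z := by
      calc x*y*(z*x)*(y*(z*x))*y*z = (x*y*z)*(x*y*z)*(x*y*z) := by simp only [mul_assoc]
        _ = x*y*z := by rw [hs, hs]
    rw [e1] at h1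
    exact h1
  by_contra hcon
  push_neg at hcon
  obtain ⟨h1, h2⟩ := hcon
  obtain ⟨a, b, c, hab⟩ := h1
  obtain ⟨p, q, r, hqr⟩ := h2
  have habc : a*b*c = b*c := (T a b c).resolve_left hab
  have hpqr : p*q*r = p*q := (T p q r).resolve_right hqr
  have hne1 : b*c ≠ a*b := fun hh => hab (habc.trans hh)
  have hne2 : p*q ≠ q*r := fun hh => hqr (hpqr.trans hh)
  -- (ab)(bc) = bc
  have F2 : (a*b)*(b*c) = b*c := by
    calc (a*b)*(b*c) = (a*b)*((a*b)*c) := by rw [habc]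
      _ = ((a*b)*(a*b))*c := by rw [mul_assoc (a*b) (a*b) c]
      _ = (a*b)*c := by rw [sq a b]
      _ = b*c := habc
  -- (pq)(qr) = pq
  have hpk : p*(q*r) = p*q := by rw [← mul_assoc p q r]; exact hpqr
  have F1 : (p*q)*(q*r) = p*q := by
    calc (p*q)*(q*r) = (p*(q*r))*(q*r) := by rw [hpk]
      _ = p*((q*r)*(q*r)) := by rw [mul_assoc p (q*r) (q*r)]
      _ = p*(q*r) := by rw [sq q r]
      _ = p*q := hpk
  -- sandwich facts
  have hMe : ∀ x y u v : S, x*y*(b*c)*(u*v) = x*y ∨ x*y*(b*c)*(u*v) = u*v := by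
    intro x y u v
    have h1 := h x y b c u v
    have e1 : x*y*b*c*u*v = x*y*(b*c)*(u*v) := by simp only [mul_assoc]
    rw [e1] at h1; exact h1
  have hMf : ∀ x y u v : S, x*y*(p*q)*(u*v) = x*y ∨ x*y*(p*q)*(u*v) = u*v := by
    intro x y u v
    have h1 := h x y p q u v
    have e1 : x*y*p*q*u*v = x*y*(p*q)*(u*v) := by simp only [mul_assoc]
    rw [e1] at h1; exact h1
  -- I2 : (bc)(pq) = ab ∨ (bc)(pq) = pq
  have I2 := hMe a b p q
  rw [F2] at I2
  -- I1 : (bc)(pq) = bc ∨ (bc)(pq) = qr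
  have I1 := hMf b c q r
  have eI1 : b*c*(p*q)*(q*r) = b*c*(p*q) := by
    rw [mul_assoc (b*c) (p*q) (q*r), F1]
  rw [eI1] at I1
  rcases I2 with i2 | i2 <;> rcases I1 with i1 | i1
  · -- (bc)(pq) = ab and = bc : bc = ab
    exact hne1 (i1.symm.trans i2)
  · -- (bc)(pq) = ab and = qr
    have Ife := hMe p q b c
    have eIf : p*q*(b*c)*(b*c) = p*q*(b*c) := by
      rw [mul_assoc (p*q) (b*c) (b*c), sq b c]
    rw [eIf] at Ife
    rcases Ife with hf | hf
    · -- (pq)(bc) = pq : derive bc*(pq) = bc, contra with i2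
      have h5 : b*c*(p*q) = b*c := by
        calc b*c*(p*q) = b*c*((p*q)*(b*c)) := by rw [hf]
          _ = (b*c*(p*q))*(b*c) := by rw [mul_assoc (b*c) (p*q) (b*c)]
          _ = (a*b)*(b*c) := by rw [i2]
          _ = b*c := F2
      exact hne1 (h5.symm.trans i2)
    · -- (pq)(bc) = bc : derive bc*(pq) = pq, contra with i1
      have h5 : b*c*(p*q) = p*q := by
        calc b*c*(p*q) = ((p*q)*(b*c))*(p*q) := by rw [hf]
          _ = (p*q)*((b*c)*(p*q)) := by rw [mul_assoc (p*q) (b*c) (p*q)]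
          _ = (p*q)*(q*r) := by rw [i1]
          _ = p*q := F1
      exact hne2 (h5.symm.trans i1)
  · -- (bc)(pq) = pq and = bc : bc = pq
    have hef : b*c = p*q := i1.symm.trans i2
    have I3 := hMe a b q r
    have e3 : a*b*(b*c)*(q*r) = b*c := by
      calc a*b*(b*c)*(q*r) = (b*c)*(q*r) := by rw [F2]
        _ = (p*q)*(q*r) := by rw [hef]
        _ = p*q := F1
        _ = b*c := hef.symm
    rw [e3] at I3
    rcases I3 with i3 | i3
    · exact hne1 i3
    · exact hne2 (hef.symm.trans i3)
  · -- (bc)(pq) = pq and = qr : pq = qr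
    exact hne2 (i2.symm.trans i1)
end

section
/- Let S be a semigroup such that for all x, y, w, q ∈ S, x*y ∈ {x*y*w, q*x*y}. Then S satisfies x*y*z = x*y for all x, y, z, or S satisfies x*y*z = y*z for all x, y, z. -/
theorem stmt_8 {S : Type*} [Semigroup S]
    (h : ∀ x y w q : S, x * y = x * y * w ∨ x * y = q * (x * y)) :
    (∀ x y z : S, x * y * z = x * y) ∨ (∀ x y z : S, x * y * z = y * z) := by
  by_cases H : ∀ x y z : S, x * y * z = x * y
  · exact Or.inl H
  · right
    push_neg at H
    obtain ⟨a, b, c, hc⟩ := H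
    have hp : ∀ q : S, a * b = q * (a * b) := fun q =>
      (h a b c q).resolve_left (fun e => hc e.symm)
    intro x y z
    rcases h y z (a * b) x with e | e
    · have hyz : y * z = a * b := e.trans (hp (y * z)).symm
      rw [mul_assoc, hyz]
      exact (hp x).symm
    · rw [mul_assoc]
      exact e.symm
end

section
/- Let S be a semigroup such that for all x, y, z, w ∈ S, x*y*x ∈ {x, z*w}. Then S is a zero semigroup or a rectangular band. -/
theorem stmt_10 {S : Type*} [Semigroup S]
    (h : ∀ x y z w : S, x * y * x = x ∨ x * y * x = z * w) :
    (∀ x y z w : S, x * y = z * w) ∨ (∀ x y : S, x * y * x = x) := by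
  by_cases hr : ∀ x y : S, x * y * x = x
  · exact Or.inr hr
  · push_neg at hr
    obtain ⟨a, b, hab⟩ := hr
    left
    intro x y z w
    have h1 := (h a b x y).resolve_left hab
    have h2 := (h a b z w).resolve_left hab
    rw [← h1, ← h2]
end

section
/- Let S be a semigroup such that for all x, y, w ∈ S, x*y*x ∈ {x, w*x}. Then S is a rectangular band, or S satisfies x*y = x²*y² for all x, y together with x*y*z = w*z for all x, y, z, w (i.e., S is an inflation of a right zero semigroup). -/
theorem stmt_11 {S : Type*} [Semigroup S]
    (h : ∀ x y w : S, x * y * x = x ∨ x * y * x = w * x) :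
    (∀ x y : S, x * y * x = x) ∨
      ((∀ x y : S, x * y = x * x * (y * y)) ∧ (∀ x y z w : S, x * y * z = w * z)) := by
  by_cases hP : ∀ x y : S, x * y * x = x
  · exact Or.inl hP
  push_neg at hP
  obtain ⟨c, b, hcb⟩ := hP
  -- all left multiples of c are equal to c*c
  have hc : ∀ w : S, w * c = c * c := by
    intro w
    have h1 := (h c b w).resolve_left hcb
    have h2 := (h c b c).resolve_left hcb
    exact h1.symm.trans h2
  -- key constancy lemma : a*z does not depend on a
  have key : ∀ z a b : S, a * z = b * z := by
    intro z a b'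
    by_cases hz : ∃ y, z * y * z ≠ z
    · obtain ⟨y, hy⟩ := hz
      have ha := (h z y a).resolve_left hy
      have hb := (h z y b').resolve_left hy
      exact ha.symm.trans hb
    · push_neg at hz
      -- z is idempotent
      have hz3 : z * z * z = z := hz z
      have hzz : z * z = z := by
        have h5 : z * z * z * (z * z) = z := by
          rw [hz3, ← mul_assoc, hz3]
        rcases h (z * z) z (z * z) with h6 | h6
        · rw [h5] at h6; exact h6.symm
        · rw [h5] at h6
          rw [← mul_assoc, hz3] at h6
          exact h6.symm
      -- c*c*z = z
      have hzc : z * c = c * c := hc z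
      have hc2z : c * c * z = z := by
        rw [← hzc]; exact hz c
      have hc3 : c * c * c = c * c := hc (c * c)
      -- (c*z)*(c*z) = z
      have t2 : c * z * (c * z) = z := by
        rw [← mul_assoc, mul_assoc c z c, hzc, ← mul_assoc, hc3, hc2z]
      -- c*z = z
      have hcz : c * z = z := by
        have ta : c * z * (c * z * (c * z)) = c * z := by
          rw [t2, mul_assoc, hzz]
        have tb : c * z * (c * z) * (c * z) = z := by
          rw [t2, ← mul_assoc, hzc, hc2z]
        rw [← mul_assoc] at ta
        rw [tb] at ta
        exact ta.symm
      -- hence a*z = z for every a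
      have final : ∀ a : S, a * z = z := by
        intro a
        calc a * z = a * (c * z) := by rw [hcz]
          _ = a * c * z := by rw [mul_assoc]
          _ = c * c * z := by rw [hc a]
          _ = z := hc2z
      rw [final a, final b']
  right
  constructor
  · intro x y
    have := key y (x * x * y) x
    rw [← mul_assoc]
    exact this.symm
  · intro x y z w
    exact key z (x * y) w
end

section
/- Let S be a semigroup satisfying x*y = (x*y)² for all x, y, and such that for all x, y, w, q ∈ S, x*y*x ∈ {x, w*x, x*q}. Then S is a rectangular band, or S satisfies x*y*z = x*w for all x, y, z, w, or S satisfies x*y*z = w*z for all x, y, z, w. -/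
theorem stmt_12 {S : Type*} [Semigroup S]
    (h1 : ∀ x y : S, x * y = x * y * (x * y))
    (h2 : ∀ x y w q : S, x * y * x = x ∨ x * y * x = w * x ∨ x * y * x = x * q) :
    (∀ x y : S, x * y * x = x) ∨ (∀ x y z w : S, x * y * z = x * w) ∨
      (∀ x y z w : S, x * y * z = w * z) := by
  by_cases hrect : ∀ x y : S, x * y * x = x
  · exact Or.inl hrect
  push_neg at hrect
  obtain ⟨x0, y0, hne⟩ := hrect
  have tri : ∀ w q : S, x0 * y0 * x0 = w * x0 ∨ x0 * y0 * x0 = x0 * q := by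
    intro w q
    rcases h2 x0 y0 w q with h | h | h
    · exact absurd h hne
    · exact Or.inl h
    · exact Or.inr h
  by_cases hL : ∀ q : S, x0 * q = x0 * y0 * x0
  · -- Case A: x0 * q is constant (= c); prove conclusion 2
    right; left
    set c := x0 * y0 * x0 with hc
    have hcc : ∀ z : S, c * z = c := by
      intro z
      have h00 : x0 * x0 = c := hL x0
      calc c * z = x0 * x0 * z := by rw [h00]
        _ = x0 * (x0 * z) := mul_assoc _ _ _
        _ = c := hL _
    have key : ∀ x p q : S, x * p = x * q := by
      intro x p q
      have h1' : ∀ z : S, x * x0 * z = x * c := by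
        intro z
        calc x * x0 * z = x * (x0 * z) := mul_assoc _ _ _
          _ = x * c := by rw [hL]
      have hd : ∀ z : S, x * x0 * z = x * x0 := by
        intro z
        rw [h1' z]
        have hi : x * x0 = x * x0 * (x * x0) := h1 x x0
        rw [hi, h1' (x * x0)]
      have hv : x * x0 * x = x * x0 := hd x
      by_cases hdx : x * x0 = x
      · have hx : ∀ z : S, x * z = x := by
          intro z
          calc x * z = x * x0 * z := by rw [hdx]
            _ = x * x0 := hd z
            _ = x := hdx
        rw [hx p, hx q]
      · have tri2 : ∀ w q : S, x * x0 = w * x ∨ x * x0 = x * q := by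
          intro w q
          rcases h2 x x0 w q with h | h | h
          · rw [hv] at h; exact absurd h hdx
          · rw [hv] at h; exact Or.inl h
          · rw [hv] at h; exact Or.inr h
        by_cases hLx : ∀ q : S, x * q = x * x0
        · rw [hLx p, hLx q]
        · push_neg at hLx
          obtain ⟨q0, hq0⟩ := hLx
          have hw : ∀ w : S, x * x0 = w * x := by
            intro w
            rcases tri2 w q0 with h | h
            · exact h
            · exact absurd h.symm hq0
          have hva : x * x0 = c := by rw [hw x0]; exact hL x
          have hwa : ∀ w : S, w * x = c := by
            intro w; rw [← hw w]; exact hva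
          have hxs : ∀ s : S, x * s = c := by
            intro s
            have huu : x * s = x * s * (x * s) := h1 x s
            have huxu : x * s * x * (x * s) = c := by
              rw [hwa (x * s), hcc]
            rcases h2 (x * s) x (x * s) (x * s) with h | h | h
            · rw [huxu] at h; exact h.symm
            · rw [huxu, ← huu] at h; exact h.symm
            · rw [huxu, ← huu] at h; exact h.symm
          rw [hxs p, hxs q]
    intro x y z w
    rw [mul_assoc]
    exact key x (y * z) w
  · -- Case B: w * x0 is constant (= c); prove conclusion 3
    push_neg at hL
    obtain ⟨p0, hp0⟩ := hL
    have hR : ∀ w : S, w * x0 = x0 * y0 * x0 := by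
      intro w
      rcases tri w p0 with h | h
      · exact h.symm
      · exact absurd h.symm hp0
    right; right
    set c := x0 * y0 * x0 with hc
    have hcc : ∀ z : S, z * c = c := by
      intro z
      have h00 : x0 * x0 = c := hR x0
      calc z * c = z * (x0 * x0) := by rw [h00]
        _ = z * x0 * x0 := (mul_assoc _ _ _).symm
        _ = c * x0 := by rw [hR z]
        _ = c := hR c
    have key : ∀ x p q : S, p * x = q * x := by
      intro x p q
      have h1' : ∀ z : S, z * (x0 * x) = c * x := by
        intro z
        calc z * (x0 * x) = z * x0 * x := (mul_assoc _ _ _).symm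
          _ = c * x := by rw [hR z]
      have hd : ∀ z : S, z * (x0 * x) = x0 * x := by
        intro z
        rw [h1' z]
        have hi : x0 * x = x0 * x * (x0 * x) := h1 x0 x
        conv_rhs => rw [hi]
        rw [show x0 * x * (x0 * x) = x0 * x * (x0 * x) from rfl, h1' (x0 * x)]
      have hv : x * x0 * x = x0 * x := by
        rw [mul_assoc]; exact hd x
      by_cases hdx : x0 * x = x
      · have hx : ∀ z : S, z * x = x := by
          intro z
          calc z * x = z * (x0 * x) := by rw [hdx]
            _ = x0 * x := hd z
            _ = x := hdx
        rw [hx p, hx q]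
      · have tri2 : ∀ w q : S, x0 * x = w * x ∨ x0 * x = x * q := by
          intro w q
          rcases h2 x x0 w q with h | h | h
          · rw [hv] at h; exact absurd h hdx
          · rw [hv] at h; exact Or.inl h
          · rw [hv] at h; exact Or.inr h
        by_cases hRx : ∀ w : S, w * x = x0 * x
        · rw [hRx p, hRx q]
        · push_neg at hRx
          obtain ⟨w0, hw0⟩ := hRx
          have hq : ∀ q : S, x0 * x = x * q := by
            intro q
            rcases tri2 w0 q with h | h
            · exact absurd h.symm hw0
            · exact h
          have hva : x0 * x = c := by rw [hq x0]; exact hR x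
          have hqa : ∀ q : S, x * q = c := by
            intro q; rw [← hq q]; exact hva
          have hxs : ∀ s : S, s * x = c := by
            intro s
            have huu : s * x = s * x * (s * x) := h1 s x
            have huxu : s * x * x * (s * x) = c := by
              calc s * x * x * (s * x) = s * x * (x * (s * x)) := mul_assoc _ _ _
                _ = s * x * c := by rw [hqa (s * x)]
                _ = c := hcc _
            rcases h2 (s * x) x (s * x) (s * x) with h | h | h
            · rw [huxu] at h; exact h.symm
            · rw [huxu, ← huu] at h; exact h.symm
            · rw [huxu, ← huu] at h; exact h.symm
          rw [hxs p, hxs q]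
    intro x y z w
    exact key z (x * y) w
end

section
/- Let S be a semigroup satisfying x*y = x*y*z*w*x*y for all x, y, z, w, and such that for all x, y, w ∈ S, x*y*x ∈ {x, x*y*w}. Then S satisfies x*y*z = x*y for all x, y, z (S² is a left zero semigroup), or S is a rectangular band. -/
theorem stmt_13 {S : Type*} [Semigroup S]
    (h1 : ∀ x y z w : S, x * y = x * y * z * w * (x * y))
    (h2 : ∀ x y w : S, x * y * x = x ∨ x * y * x = x * y * w) :
    (∀ x y z : S, x * y * z = x * y) ∨ (∀ x y : S, x * y * x = x) := by
  by_cases hr : ∀ x y : S, x * y * x = x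
  · exact Or.inr hr
  push_neg at hr
  obtain ⟨x, y, hxy⟩ := hr
  -- key lemma: if a*b*a ≠ a then a*b is a left zero
  have lz : ∀ a b : S, a * b * a ≠ a → ∀ t, a * b * t = a * b := by
    intro a b h t
    have hc : ∀ w, a * b * a = a * b * w := fun w => (h2 a b w).resolve_left h
    have key : a * b = a * b * a := by
      calc a * b = a * b * a * a * (a * b) := h1 a b a a
        _ = a * b * (a * a) * (a * b) := by rw [mul_assoc (a*b) a a]
        _ = a * b * a * (a * b) := by rw [← hc (a * a)]
        _ = a * b * (a * (a * b)) := by rw [mul_assoc (a*b) a (a*b)]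
        _ = a * b * a := (hc (a * (a * b))).symm
    rw [← hc t, ← key]
  have hf : ∀ t, x * y * t = x * y := lz x y hxy
  left
  intro u v z
  by_cases huv : u * v * u = u
  · -- u = u*zz*ww*u for all zz ww
    have hu : ∀ zz ww : S, u = u * zz * ww * u := by
      intro zz ww
      have h' := h1 u (v * u) zz ww
      have huvu : u * (v * u) = u := by rw [← mul_assoc]; exact huv
      rwa [huvu] at h'
    have huf : ∀ t, u * (x * y) * t = u * (x * y) := by
      intro t; rw [mul_assoc, hf t]
    have hufx : u = u * (x * y) := by
      calc u = u * (x * y) * u * u := hu (x * y) u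
        _ = u * (x * y) := by rw [huf u]; exact huf u
    have hul : ∀ t, u * t = u := by
      intro t
      have h' := huf t
      rw [← hufx] at h'
      exact h'
    calc u * v * z = u := by rw [mul_assoc]; exact hul (v * z)
      _ = u * v := (hul v).symm
  · exact lz u v huv z
end

section
/- Let S be a semigroup satisfying x*y = x*y*z*w*x*y for all x, y, z, w, and such that for all x, y, w, q ∈ S, x*y*x ∈ {x, x*y*w, q*y*x}. Then S satisfies x*y*z = x*y for all x, y, z, or S is a rectangular band, or S satisfies x*y*z = y*z for all x, y, z. -/
theorem stmt_14 {S : Type*} [Semigroup S]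
    (h1 : ∀ x y z w : S, x * y = x * y * z * w * (x * y))
    (h2 : ∀ x y w q : S, x * y * x = x ∨ x * y * x = x * y * w ∨ x * y * x = q * y * x) :
    (∀ x y z : S, x * y * z = x * y) ∨ (∀ x y : S, x * y * x = x) ∨
      (∀ x y z : S, x * y * z = y * z) := by
  classical
  -- every product is idempotent
  have idem : ∀ x y : S, (x * y) * (x * y) = x * y := by
    intro x y
    have e3 : (x * y) * ((x * y) * (x * y)) = x * y := by
      have h := h1 x y x y
      simp only [mul_assoc] at h ⊢
      exact h.symm
    have h := h1 x y ((x * y) * (x * y)) ((x * y) * (x * y))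
    rw [e3, e3] at h
    exact h.symm
  -- S² is a rectangular band
  have rect' : ∀ e f : S, (∃ u v, e = u * v) → (∃ u v, f = u * v) →
      e * f * e = e := by
    rintro e f ⟨u, v, rfl⟩ ⟨s, t, rfl⟩
    have h := (h1 u v s t).symm
    simp only [mul_assoc] at h ⊢
    exact h
  have rect3 : ∀ e f g : S, (∃ u v, e = u * v) → (∃ u v, f = u * v) →
      (∃ u v, g = u * v) → e * f * g = e * g := by
    intro e f g he hf hg
    have hgeg : g * e * g = g := rect' g e hg he
    have hefge : e * (f * g) * e = e := rect' e (f * g) he ⟨f, g, rfl⟩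
    calc e * f * g = e * f * (g * e * g) := by rw [hgeg]
      _ = (e * (f * g) * e) * g := by simp only [mul_assoc]
      _ = e * g := by rw [hefge]
  -- pointwise trichotomy from h2
  have trich : ∀ x y : S, x * y * x = x ∨ (∀ w, x * y * w = x * y) ∨
      (∀ q, q * y * x = y * x) := by
    intro x y
    by_cases hP : x * y * x = x
    · exact Or.inl hP
    by_cases hq : ∀ q : S, x * y * x = q * y * x
    · right; right
      have hyx : x * y * x = y * x := by
        rw [hq (y * x), mul_assoc (y * x) y x, idem y x]
      intro q
      rw [← hq q, hyx]
    · push_neg at hq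
      obtain ⟨q0, hq0⟩ := hq
      right; left
      have key : ∀ w, x * y * x = x * y * w := by
        intro w
        rcases h2 x y w q0 with h | h | h
        · exact absurd h hP
        · exact h
        · exact absurd h hq0
      have hxy : x * y * x = x * y := by
        rw [key (x * y)]; exact idem x y
      intro w
      rw [← key w, hxy]
  by_cases hB : ∀ x y : S, x * y * x = x
  · exact Or.inr (Or.inl hB)
  push_neg at hB
  obtain ⟨a, b, hab⟩ := hB
  rcases trich a b with h | hL | hR
  · exact absurd h hab
  · -- a*b is a left zero: S² is a left-zero semigroup
    left
    have ge : ∀ g : S, (∃ u v, g = u * v) → g * (a * b) = g := by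
      intro g hg
      have h3 : g * (a * b) * g = g := rect' g (a * b) hg ⟨a, b, rfl⟩
      calc g * (a * b) = g * ((a * b) * g) := by rw [hL g]
        _ = g * (a * b) * g := (mul_assoc _ _ _).symm
        _ = g := h3
    have gh : ∀ g h : S, (∃ u v, g = u * v) → (∃ u v, h = u * v) →
        g * h = g := by
      intro g h hg hh
      calc g * h = g * (a * b) * h := (rect3 g (a * b) h hg ⟨a, b, rfl⟩ hh).symm
        _ = g * ((a * b) * h) := mul_assoc _ _ _
        _ = g * (a * b) := by rw [hL h]
        _ = g := ge g hg
    intro x y z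
    have key := gh (x * y * z) (z * (x * y)) ⟨x * y, z, rfl⟩ ⟨z, x * y, rfl⟩
    calc x * y * z = (x * y * z) * (z * (x * y)) := key.symm
      _ = x * y * z * z * (x * y) := (mul_assoc _ _ _).symm
      _ = x * y := (h1 x y z z).symm
  · -- b*a is a right zero: S² is a right-zero semigroup
    right; right
    have rz : ∀ q : S, q * (b * a) = b * a := by
      intro q; rw [← mul_assoc]; exact hR q
    have eh : ∀ h : S, (∃ u v, h = u * v) → (b * a) * h = h := by
      intro h hh
      have h3 : h * (b * a) * h = h := rect' h (b * a) hh ⟨b, a, rfl⟩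
      calc (b * a) * h = h * (b * a) * h := by rw [rz h]
        _ = h := h3
    have gh : ∀ g h : S, (∃ u v, g = u * v) → (∃ u v, h = u * v) →
        g * h = h := by
      intro g h hg hh
      calc g * h = g * (b * a) * h := (rect3 g (b * a) h hg ⟨b, a, rfl⟩ hh).symm
        _ = (b * a) * h := by rw [rz g]
        _ = h := eh h hh
    intro x y z
    have key := gh ((y * z) * z) (x * (y * z)) ⟨y * z, z, rfl⟩ ⟨x, y * z, rfl⟩
    calc x * y * z = x * (y * z) := mul_assoc _ _ _
      _ = ((y * z) * z) * (x * (y * z)) := key.symm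
      _ = y * z * z * x * (y * z) := by simp only [mul_assoc]
      _ = y * z := (h1 y z z x).symm
end

section
/- Let S be a semigroup such that for all x, y, w, q ∈ S, x*y ∈ {x*w*y, x*y*q}. Then S satisfies x*y*z = x*y for all x, y, z, or S satisfies x*y*z = x*z for all x, y, z (i.e., S is an inflation of a rectangular band). -/
theorem stmt_15 {S : Type*} [Semigroup S]
    (h : ∀ x y w q : S, x * y = x * w * y ∨ x * y = x * y * q) :
    (∀ x y z : S, x * y * z = x * y) ∨ (∀ x y z : S, x * y * z = x * z) := by
  by_cases h2 : ∀ x y z : S, x * y * z = x * z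
  · exact Or.inr h2
  · left
    push_neg at h2
    obtain ⟨a, b, c, habc⟩ := h2
    have he : ∀ q : S, a * c * q = a * c := by
      intro q
      rcases h a c b q with h1 | h1
      · exact absurd h1.symm habc
      · exact h1.symm
    intro x y z
    rcases h x y (a * c) z with h1 | h1
    · have e1 : x * (a * c) * y = x * (a * c) := by rw [mul_assoc, he]
      have e2 : x * (a * c) * z = x * (a * c) := by rw [mul_assoc, he]
      rw [h1, e1]
      exact e2
    · exact h1.symm
end

section
/- Let S be a semigroup such that for all x, y, w, v, q ∈ S, x*y ∈ {x*y*w, x*v*y, q*x*y}. Then S satisfies x*y*z = x*y for all x, y, z, or S satisfies x*y*z = x*z for all x, y, z, or S satisfies x*y*z = y*z for all x, y, z. -/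
theorem stmt_16 {S : Type*} [Semigroup S]
    (h : ∀ x y w v q : S, x * y = x * y * w ∨ x * y = x * v * y ∨ x * y = q * (x * y)) :
    (∀ x y z : S, x * y * z = x * y) ∨ (∀ x y z : S, x * y * z = x * z) ∨
      (∀ x y z : S, x * y * z = y * z) := by
  -- Step 1: pointwise uniform trichotomy for each pair
  have key : ∀ x y : S, (∀ w, x * y = x * y * w) ∨ (∀ v, x * y = x * v * y) ∨
      (∀ q, x * y = q * (x * y)) := by
    intro x y
    by_contra hc
    push_neg at hc
    obtain ⟨⟨w0, hw⟩, ⟨v0, hv⟩, ⟨q0, hq⟩⟩ := hc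
    rcases h x y w0 v0 q0 with h1 | h1 | h1
    · exact hw h1
    · exact hv h1
    · exact hq h1
  by_contra hc
  push_neg at hc
  obtain ⟨⟨a, b, w0, hw⟩, ⟨c, d, f, hd⟩, ⟨x0, y0, z0, hx⟩⟩ := hc
  set r := y0 * z0 with hr
  have hx' : x0 * r ≠ r := by rw [hr, ← mul_assoc]; exact hx
  -- pair (y0, z0) is L or M (not R because of witness x0)
  have key3 : (∀ w, r * w = r) ∨ (∀ v : S, r = y0 * v * z0) := by
    rcases key y0 z0 with h3 | h3 | h3
    · exact Or.inl fun w => (h3 w).symm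
    · exact Or.inr h3
    · exact absurd (h3 x0).symm hx'
  -- no element of S is a right zero (absorbed by left multiplication)
  have noRZ : ∀ z : S, ¬ (∀ q : S, q * z = z) := by
    intro z hz
    rcases key3 with hL | hM
    · -- r is a left zero: r * z = r and r * z = z force r = z
      have hrz : r = z := by rw [← hL z, hz r]
      exact hx' (by rw [hrz, hz])
    · have hrr : r * r = r := by
        calc r * r = y0 * (z0 * y0) * z0 := by simp [hr, mul_assoc]
        _ = r := (hM _).symm
      rcases key r r with h4 | h4 | h4
      · -- r*r = r is a left zero
        have hL : ∀ w, r * w = r := fun w => by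
          have := h4 w; rw [hrr] at this; exact this.symm
        have hrz : r = z := by rw [← hL z, hz r]
        exact hx' (by rw [hrz, hz])
      · -- M(r,r): r = r*z*r = z*r, so x0*r = r
        have h6 := h4 z
        rw [hrr, hz r] at h6
        refine hx' ?_
        calc x0 * r = x0 * (z * r) := by rw [← h6]
        _ = x0 * z * r := (mul_assoc _ _ _).symm
        _ = z * r := by rw [hz]
        _ = r := h6.symm
      · -- r is a right zero: immediate contradiction
        have h6 := h4 x0
        rw [hrr] at h6
        exact hx' h6.symm
  rcases key a b with h1 | h1 | h1
  · exact hw (h1 w0).symm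
  · -- pair (a,b) is M with failing witness w0
    set t := a * b with ht
    have hw' : t * w0 ≠ t := fun hh => hw hh
    have htt : t * t = t := by
      calc t * t = a * (b * a) * b := by simp [ht, mul_assoc]
      _ = t := (h1 _).symm
    rcases key t t with h2 | h2 | h2
    · -- t would be a left zero, contradicting w0
      have := h2 w0; rw [htt] at this
      exact hw' this.symm
    · -- M(t,t): t = t*v*t for all v
      have hM2 : ∀ v, t = t * v * t := fun v => by
        have := h2 v; rw [htt] at this; exact this
      rcases key c f with h5 | h5 | h5
      · -- s = c*f is a left zero: t = t*s*t = t*s, contradiction with w0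
        set s := c * f with hs
        have hst : s * t = s := (h5 t).symm
        have h6 : t = t * s := by
          calc t = t * s * t := hM2 s
          _ = t * (s * t) := mul_assoc _ _ _
          _ = t * s := by rw [hst]
        refine hw' ?_
        calc t * w0 = t * s * w0 := by rw [← h6]
        _ = t * (s * w0) := mul_assoc _ _ _
        _ = t * s := by rw [(h5 w0).symm]
        _ = t := h6.symm
      · -- pair (c,f) middle-insertable contradicts witness d
        exact hd (h5 d).symm
      · -- s = c*f is a right zero: contradiction with noRZ
        exact noRZ (c * f) fun q => (h5 q).symm
    · -- t would be a right zero (since t*t = t): contradiction with noRZ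
      have : ∀ q : S, q * t = t := fun q => by
        have := h2 q; rw [htt] at this; exact this.symm
      exact noRZ t this
  · -- pair (a,b) is R: a*b is a right zero, contradiction with noRZ
    exact noRZ (a * b) fun q => (h1 q).symm
end

section
/- Let S be a semigroup satisfying x*y = (x*y)² for all x, y, and such that for all x, y, z, w, q ∈ S, x*y*z ∈ {x*y*w*z, x*q*y*z}. Then S satisfies x*y*z = x*y*w*z for all x, y, z, w, or S satisfies x*y*z = x*w*y*z for all x, y, z, w. -/
theorem stmt_18 {S : Type*} [Semigroup S]
    (h1 : ∀ x y : S, x * y = x * y * (x * y))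
    (h2 : ∀ x y z w q : S, x * y * z = x * y * w * z ∨ x * y * z = x * q * y * z) :
    (∀ x y z w : S, x * y * z = x * y * w * z) ∨ (∀ x y z w : S, x * y * z = x * w * y * z) := by
  by_contra hcon
  push_neg at hcon
  obtain ⟨⟨a, b, c, d, hN2⟩, ⟨x, y, z, w, hN1⟩⟩ := hcon
  simp only [mul_assoc] at hN1 hN2
  -- hN1 : x*(y*z) ≠ x*(w*(y*z)),  hN2 : a*(b*c) ≠ a*(b*(d*c))
  have hB : ∀ v : S, x*(y*z) = x*(y*(v*z)) := by
    intro v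
    rcases h2 x y z v w with h | h
    · simpa [mul_assoc] using h
    · exact absurd (by simpa [mul_assoc] using h) hN1
  have hP : ∀ v : S, x*(w*(y*z)) = x*(w*(y*(v*z))) := by
    intro v
    rcases h2 x (w*y) z v y with h | h
    · simpa [mul_assoc] using h
    · have h' : x*(w*(y*z)) = x*(y*(w*(y*z))) := by simpa [mul_assoc] using h
      have hb : x*(y*z) = x*(y*(w*(y*z))) := by simpa [mul_assoc] using hB (w*y)
      exact absurd (hb.trans h'.symm) hN1
  have hF3 : ∀ v : S, x*(w*z) = x*(w*(v*z)) := by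
    intro v
    rcases h2 x w z v y with h | h1
    · simpa [mul_assoc] using h
    rcases h2 x w z v (w*y) with h | h2'
    · simpa [mul_assoc] using h
    have e1 : x*(w*z) = x*(y*(w*z)) := by simpa [mul_assoc] using h1
    have e2 : x*(w*z) = x*(w*(y*(w*z))) := by simpa [mul_assoc] using h2'
    have : x*(y*z) = x*(w*(y*z)) := by
      calc x*(y*z) = x*(y*(w*z)) := hB w
        _ = x*(w*z) := e1.symm
        _ = x*(w*(y*(w*z))) := e2
        _ = x*(w*(y*z)) := (hP w).symm
    exact absurd this hN1
  -- a-side facts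
  have hA : ∀ q : S, a*(b*c) = a*(q*(b*c)) := by
    intro q
    rcases h2 a b c d q with h | h
    · exact absurd (by simpa [mul_assoc] using h) hN2
    · simpa [mul_assoc] using h
  have hR1 : ∀ v : S, a*(b*(d*c)) = a*(v*(b*(d*c))) := by
    intro v
    rcases h2 a (b*d) c b v with h | h
    · have e : a*(b*(d*c)) = a*(b*(d*(b*c))) := by simpa [mul_assoc] using h
      have e2 : a*(b*c) = a*(b*(d*(b*c))) := by simpa [mul_assoc] using hA (b*d)
      exact absurd (e2.trans e.symm) hN2
    · simpa [mul_assoc] using h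
  have hF3' : ∀ q : S, a*(d*c) = a*(q*(d*c)) := by
    intro q
    rcases h2 a d c b q with h1 | h
    swap
    · simpa [mul_assoc] using h
    rcases h2 a d c (b*d) q with h2' | h
    swap
    · simpa [mul_assoc] using h
    have e1 : a*(d*c) = a*(d*(b*c)) := by simpa [mul_assoc] using h1
    have e2 : a*(d*c) = a*(d*(b*(d*c))) := by simpa [mul_assoc] using h2'
    have f1 : a*(b*c) = a*(d*c) := by
      have := hA d
      exact this.trans e1.symm
    have f2 : a*(b*(d*c)) = a*(d*c) := by
      have := hR1 d
      exact this.trans e2.symm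
    exact absurd (f1.trans f2.symm) hN2
  have hN2' : a*(b*c) ≠ a*(d*c) := by
    intro h
    exact hN2 (h.trans (hF3' b))
  have hG0' : ∀ k q : S, a*(k*c) = a*(q*(k*c)) := by
    intro k q
    rcases h2 a k c b q with h1 | h
    swap
    · simpa [mul_assoc] using h
    rcases h2 a k c d q with h2' | h
    swap
    · simpa [mul_assoc] using h
    have e1 : a*(k*c) = a*(k*(b*c)) := by simpa [mul_assoc] using h1
    have e2 : a*(k*c) = a*(k*(d*c)) := by simpa [mul_assoc] using h2'
    have f1 : a*(b*c) = a*(k*c) := (hA k).trans e1.symm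
    have f2 : a*(d*c) = a*(k*c) := (hF3' k).trans e2.symm
    exact absurd (f1.trans f2.symm) hN2'
  -- cross facts
  have hXb : x*(b*c) = x*(b*(d*c)) := by
    rcases h2 x b c d y with h | h1
    · simpa [mul_assoc] using h
    rcases h2 x b c d w with h | h2'
    · simpa [mul_assoc] using h
    have e1 : x*(b*c) = x*(y*(b*c)) := by simpa [mul_assoc] using h1
    have e2 : x*(b*c) = x*(w*(b*c)) := by simpa [mul_assoc] using h2'
    have e3 : x*(y*(b*(c*z))) = x*(w*(b*(c*z))) := by
      have := congrArg (· * z) (e1.symm.trans e2)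
      simpa [mul_assoc] using this
    have : x*(y*z) = x*(w*(y*z)) := by
      calc x*(y*z) = x*(y*(b*(c*z))) := by simpa [mul_assoc] using hB (b*c)
        _ = x*(w*(b*(c*z))) := e3
        _ = x*(w*z) := by simpa [mul_assoc] using (hF3 (b*c)).symm
        _ = x*(w*(y*z)) := hF3 y
    exact absurd this hN1
  have hXd : x*(b*(d*c)) = x*(d*c) := by
    rcases h2 x d c b b with h1 | h
    · have e1 : x*(d*c) = x*(d*(b*c)) := by simpa [mul_assoc] using h1
      have e : a*(x*(d*(b*c))) = a*(x*(d*c)) := by rw [← e1]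
      have g1 : a*(x*(d*c)) = a*(d*c) := (hF3' x).symm
      have g2 : a*(x*(d*(b*c))) = a*(b*c) := by
        simpa [mul_assoc] using (hG0' b (x*d)).symm
      have : a*(b*c) = a*(d*c) := by
        calc a*(b*c) = a*(x*(d*(b*c))) := g2.symm
          _ = a*(x*(d*c)) := e
          _ = a*(d*c) := g1
      exact absurd this hN2'
    · have : x*(d*c) = x*(b*(d*c)) := by simpa [mul_assoc] using h
      exact this.symm
  apply hN2'
  calc a*(b*c) = a*(x*(b*c)) := hA x
    _ = a*(x*(b*(d*c))) := by rw [hXb]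
    _ = a*(x*(d*c)) := by rw [hXd]
    _ = a*(d*c) := (hF3' x).symm
end
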